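/- Let (f_n) be a (p,q)-Appell sequence with coefficient sequence (a_k), a_0 ≠ 0, i.e. f_n(x) = ∑_{k=0}^{n} [n choose k]_{p,q} p^{(n−k)(n−k−1)/2} a_k x^{n−k}, and let (b_k) be the sequence with ∑_{k=0}^{n} [n choose k]_{p,q} a_k b_{n−k} = δ_{n,0} (which exists since a_0 ≠ 0). Then for every n ≥ 0 and every real x, x^n = p^{−n(n−1)/2} ∑_{k=0}^{n} [n choose k]_{p,q} b_k f_{n−k}(x). -/

import Mathlib

noncomputable section
open Finset Polynomial

/-- The (p,q)-number `[n]_{p,q} = (p^n - q^n)/(p - q)`. -/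
def pqNum (p q : ℝ) (n : ℕ) : ℝ := (p ^ n - q ^ n) / (p - q)

/-- The (p,q)-factorial `[n]_{p,q}! = ∏_{k=1}^n [k]_{p,q}`. -/
def pqFact (p q : ℝ) (n : ℕ) : ℝ := ∏ k ∈ Finset.Icc 1 n, pqNum p q k

/-- The (p,q)-binomial coefficient. -/
def pqBinom (p q : ℝ) (n k : ℕ) : ℝ := pqFact p q n / (pqFact p q k * pqFact p q (n - k))

/-- The (p,q)-derivative on polynomials: the linear operator with `D(X^n) = [n]_{p,q} X^(n-1)`. -/
def pqDeriv (p q : ℝ) (f : Polynomial ℝ) : Polynomial ℝ :=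
  f.sum fun n a => Polynomial.C (a * pqNum p q n) * Polynomial.X ^ (n - 1)

/-- The (p,q)-derivative on formal power series, acting coefficientwise by
`D(X^n) = [n]_{p,q} X^(n-1)`. -/
def pqDerivPS (p q : ℝ) (f : PowerSeries ℝ) : PowerSeries ℝ :=
  PowerSeries.mk fun n => pqNum p q (n + 1) * PowerSeries.coeff (n + 1) f

/-- The double (p,q)-factorial `[2m]_{p,q}!! = ∏_{k=1}^m [2k]_{p,q}`. -/
def pqDoubleFact (p q : ℝ) (m : ℕ) : ℝ := ∏ k ∈ Finset.Icc 1 m, pqNum p q (2 * k)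

/-- A sequence of real polynomials of exact degree `n` is (p,q)-Appell when
`D_{p,q} f_{n+1}(x) = [n+1]_{p,q} f_n(p x)` for all `n ≥ 0` and all `x`. -/
def IsPQAppell (p q : ℝ) (f : ℕ → Polynomial ℝ) : Prop :=
  (∀ n, (f n).natDegree = n) ∧
    ∀ (n : ℕ) (x : ℝ), (pqDeriv p q (f (n + 1))).eval x = pqNum p q (n + 1) * (f n).eval (p * x)

/-!
Attach to a sequence `u` its (p,q)-exponential generating function `∑ uₙ Xⁿ / [n]_{p,q}!`.
The (p,q)-binomial convolution of two sequences then corresponds to the product of their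
generating functions, so the defining relation of `b` says that the series of `b` is the
inverse of the series of `a`, and `fₙ(x)` is the convolution of `a` with
`cₘ = p^{m(m-1)/2} xᵐ`. Associativity and commutativity of the product of power series give
`b ⋆ f(x) = b ⋆ (a ⋆ c) = (a ⋆ b) ⋆ c = c`, which is the claim.
-/

namespace PQCalculus

variable {p q : ℝ}

lemma pqNum_pos (hq : 0 ≤ q) (hpq : q < p) {k : ℕ} (hk : k ≠ 0) : 0 < pqNum p q k :=
  div_pos (sub_pos.2 (pow_lt_pow_left₀ hpq hq hk)) (sub_pos.2 hpq)

lemma pqFact_pos (hq : 0 ≤ q) (hpq : q < p) (n : ℕ) : 0 < pqFact p q n :=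
  prod_pos fun k hk => pqNum_pos hq hpq (by rw [mem_Icc] at hk; omega)

@[simp]
lemma pqFact_zero (p q : ℝ) : pqFact p q 0 = 1 := by simp [pqFact]

def pqEGF (p q : ℝ) (u : ℕ → ℝ) : PowerSeries ℝ :=
  PowerSeries.mk fun n => u n / pqFact p q n

@[simp]
lemma coeff_pqEGF (u : ℕ → ℝ) (n : ℕ) : PowerSeries.coeff n (pqEGF p q u) = u n / pqFact p q n :=
  PowerSeries.coeff_mk _ _

lemma coeff_pqEGF_mul (hq : 0 ≤ q) (hpq : q < p) (u v : ℕ → ℝ) (n : ℕ) :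
    PowerSeries.coeff n (pqEGF p q u * pqEGF p q v) =
      (∑ k ∈ range (n + 1), pqBinom p q n k * u k * v (n - k)) / pqFact p q n := by
  rw [PowerSeries.coeff_mul, Nat.sum_antidiagonal_eq_sum_range_succ_mk, sum_div]
  refine sum_congr rfl fun k _ => ?_
  have hF := fun m => (pqFact_pos hq hpq m).ne'
  simp only [coeff_pqEGF, pqBinom]
  field_simp [hF]

end PQCalculus

open PQCalculus in
theorem pq_appell_monomial_expansion_general (p q : ℝ) (hq : 0 < q) (hpq : q < p)
    (a b : ℕ → ℝ)
    (hb : ∀ n : ℕ, ∑ k ∈ Finset.range (n + 1), pqBinom p q n k * a k * b (n - k)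
      = if n = 0 then 1 else 0)
    (f : ℕ → ℝ → ℝ)
    (hf : ∀ (n : ℕ) (x : ℝ), f n x = ∑ k ∈ Finset.range (n + 1),
      pqBinom p q n k * p ^ ((n - k) * (n - k - 1) / 2) * a k * x ^ (n - k)) :
    ∀ (n : ℕ) (x : ℝ),
      x ^ n = (p ^ (n * (n - 1) / 2))⁻¹ *
        ∑ k ∈ Finset.range (n + 1), pqBinom p q n k * b k * f (n - k) x := by
  intro n x
  set c : ℕ → ℝ := fun m => p ^ (m * (m - 1) / 2) * x ^ m
  have hab : pqEGF p q a * pqEGF p q b = 1 := by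
    ext m
    rw [coeff_pqEGF_mul hq.le hpq, hb, PowerSeries.coeff_one]
    split_ifs with hm <;> simp [hm]
  have hfac : pqEGF p q (f · x) = pqEGF p q a * pqEGF p q c := by
    ext m
    rw [coeff_pqEGF_mul hq.le hpq, coeff_pqEGF, hf]
    congr 1
    exact sum_congr rfl fun k _ => by ring
  have hbf : pqEGF p q b * pqEGF p q (f · x) = pqEGF p q c := by
    rw [hfac, ← mul_assoc, mul_comm (pqEGF p q b), hab, one_mul]
  have hn := congrArg (PowerSeries.coeff n) hbf
  rw [coeff_pqEGF_mul hq.le hpq, coeff_pqEGF, div_left_inj' (pqFact_pos hq.le hpq n).ne'] at hn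
  rw [hn, inv_mul_cancel_left₀ (pow_pos (hq.trans hpq) _).ne']

/-- expansion of the monomials in terms of a (p,q)-Appell sequence via the
inverse coefficient sequence. -/
theorem pq_appell_monomial_expansion (p q : ℝ) (hq : 0 < q) (hpq : q < p)
    (a b : ℕ → ℝ) (ha : a 0 ≠ 0)
    (hb : ∀ n : ℕ, ∑ k ∈ Finset.range (n + 1), pqBinom p q n k * a k * b (n - k)
      = if n = 0 then 1 else 0)
    (f : ℕ → ℝ → ℝ)
    (hf : ∀ (n : ℕ) (x : ℝ), f n x = ∑ k ∈ Finset.range (n + 1),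
      pqBinom p q n k * p ^ ((n - k) * (n - k - 1) / 2) * a k * x ^ (n - k)) :
    ∀ (n : ℕ) (x : ℝ),
      x ^ n = (p ^ (n * (n - 1) / 2))⁻¹ *
        ∑ k ∈ Finset.range (n + 1), pqBinom p q n k * b k * f (n - k) x :=
  pq_appell_monomial_expansion_general p q hq hpq a b hb f hf
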